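/- In a quantum-Wajsberg algebra, say x C y (x commutes with y) if x ⊓ y = y ⊓ x, where x ⊓ y = ((x* → y*) → y*)*. Then x C y if and only if (x → y) → (x ⊓ y) = x. -/
import Mathlib


class InvBEAlgebra (X : Type*) extends One X, Zero X where
  imp : X → X → X
  imp_self : ∀ x : X, imp x x = 1
  imp_one : ∀ x : X, imp x 1 = 1
  one_imp : ∀ x : X, imp 1 x = x
  exchange : ∀ x y z : X, imp x (imp y z) = imp y (imp x z)
  zero_imp : ∀ x : X, imp 0 x = 1
  involutive : ∀ x : X, imp (imp x 0) 0 = x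

namespace InvBEAlgebra

variable {X : Type*} [InvBEAlgebra X]

def star (x : X) : X := imp x 0

def inf (x y : X) : X := star (imp (imp (star x) (star y)) (star y))

def sup (x y : X) : X := imp (imp x y) y

def odot (x y : X) : X := star (imp x (star y))

def leQ (x y : X) : Prop := x = inf x y

end InvBEAlgebra

class QWAlgebra (X : Type*) extends InvBEAlgebra X where
  qw : ∀ x y z : X, imp x (InvBEAlgebra.inf (InvBEAlgebra.inf x y) (InvBEAlgebra.inf z x)) =
        InvBEAlgebra.inf (imp x y) (imp x z)

open InvBEAlgebra

namespace InvBEAlgebra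

variable {X : Type*} [InvBEAlgebra X]

lemma sstar (x : X) : star (star x) = x := involutive x

lemma star_one : star (1 : X) = 0 := one_imp 0

lemma star_zero : star (0 : X) = 1 := zero_imp 0

/-- contraposition form 1 -/
lemma contra1 (x y : X) : imp x (star y) = imp y (star x) := exchange x y 0

/-- contraposition form 2 -/
lemma contra (x y : X) : imp (star x) (star y) = imp y x := by
  rw [contra1, sstar]

lemma star_inj {x y : X} (h : star x = star y) : x = y := by
  have := congrArg star h
  rwa [sstar, sstar] at this

lemma inf_def' (x y : X) : inf x y = star (imp (imp y x) (star y)) := by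
  unfold inf; rw [contra]

lemma inf_zero (x : X) : inf x (0 : X) = 0 := by
  unfold inf
  rw [star_zero, imp_one, star_one]

lemma zero_inf (x : X) : inf (0 : X) x = 0 := by
  unfold inf
  rw [star_zero, one_imp, imp_self, star_one]

lemma one_inf (x : X) : inf (1 : X) x = x := by
  unfold inf
  rw [star_one, zero_imp, one_imp, sstar]

lemma inf_one (x : X) : inf x (1 : X) = x := by
  unfold inf
  rw [star_one]
  show star (imp (imp (star x) 0) 0) = x
  rw [involutive (star x), sstar]

end InvBEAlgebra

namespace QWAlgebra

variable {X : Type*} [QWAlgebra X]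

/-- From qw with y := 0 :  x* = x* ⊓ (x → z). -/
lemma e4_inf (x z : X) : inf (star x) (imp x z) = star x := by
  have h := qw x 0 z
  rw [inf_zero, zero_inf] at h
  show inf (imp x 0) (imp x z) = imp x 0
  exact h.symm

/-- Star form of e4_inf : (x → c*) → c* = x  for c = x → z. -/
lemma e4 (x z : X) : imp (imp x (star (imp x z))) (star (imp x z)) = x := by
  have h := e4_inf x z
  unfold inf at h
  rw [sstar x] at h
  exact star_inj h

/-- y ⊓ x = ((x → y) → x*)* -/
lemma inf_eq_star (x y : X) : inf y x = star (imp (imp x y) (star x)) := by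
  rw [inf_def']

/-- x → (y ⊓ x) = x → y -/
lemma imp_inf_right (x y : X) : imp x (inf y x) = imp x y := by
  set c := imp x y with hc
  have ha : imp c (star x) = imp x (star c) := contra1 c x
  set a := imp x (star c) with hadef
  have hinf : inf y x = star a := by
    rw [inf_eq_star, ← hc, ha]
  have h1 : imp a (star c) = x := e4 x y
  have h2 : imp (imp c (star a)) (star a) = c := by
    have := e4 c (star x)
    rwa [ha] at this
  have h3 : imp c (star a) = x := by
    rw [contra1 c a, h1]
  rw [hinf, ← h2, h3]

/-- (x → y) → (y ⊓ x) = x -/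
lemma L1 (x y : X) : imp (imp x y) (inf y x) = x := by
  have ha : imp (imp x y) (star x) = imp x (star (imp x y)) := contra1 _ x
  have hinf : inf y x = star (imp x (star (imp x y))) := by
    rw [inf_eq_star, ha]
  rw [hinf, contra1 (imp x y) _, e4 x y]

/-- x → (x ⊓ y) = x → y -/
lemma imp_inf_left (x y : X) : imp x (inf x y) = imp x y := by
  have h := qw x y 1
  rw [one_inf, imp_one, inf_one] at h
  rw [imp_inf_right x (inf x y)] at h
  exact h

/-- x ⊓ y ≤_Q x → y  :  (x ⊓ y) ⊓ (x → y) = x ⊓ y -/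
lemma inf_absorb_left (x y : X) : inf (inf x y) (imp x y) = inf x y := by
  have key : imp (star (inf x y)) (star x) = imp x y := by
    rw [contra1, sstar, imp_inf_left]
  have h := e4_inf (star (inf x y)) (star x)
  rw [sstar, key] at h
  exact h

end QWAlgebra

theorem stmt11 {X : Type*} [QWAlgebra X] (x y : X) :
    inf x y = inf y x ↔ imp (imp x y) (inf x y) = x := by
  constructor
  · intro h
    rw [h]
    exact QWAlgebra.L1 x y
  · intro h
    have h2 : inf (inf x y) (imp x y) = inf y x := by
      rw [inf_def' (inf x y) (imp x y), h, contra1 x (imp x y),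
        ← QWAlgebra.inf_eq_star]
    rw [← QWAlgebra.inf_absorb_left x y, h2]
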